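/- arXiv:2204.12401 — 2 statements merged into one kernel-verified Lean document; each statement's English description precedes it below -/
import Mathlib

section
/- Let A be a k-algebra with first order differential calculus (Ω¹_d, d), and let E be a left A-module. A k-linear map Δ : E → F is a differential operator of order at most 1 (i.e. factors as an A-linear map through the 1-jet prolongation j¹_{d,E} : E → J¹_d E) if and only if for every element Σᵢ nᵢ ⊗ eᵢ ∈ N_d(E) one has Σᵢ nᵢ Δ(eᵢ) = 0. -/
open TensorProduct MulOpposite

/-- The relation submodule by which one quotients `Ω ⊗[ℤ] E` to obtain the balanced
tensor product `Ω ⊗[A] E` of the `A`-bimodule `Ω` with a left `A`-module `E`. -/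
def omegaRel (A : Type*) [Ring A] (Ω : Type*) (E : Type*)
    [AddCommGroup Ω] [AddCommGroup E] [Module A Ω] [Module Aᵐᵒᵖ Ω] [Module A E] :
    Submodule A (Ω ⊗[ℤ] E) :=
  Submodule.span A
    {z | ∃ (ω : Ω) (a : A) (e : E), z = (op a • ω) ⊗ₜ[ℤ] e - ω ⊗ₜ[ℤ] (a • e)}

/-- Let `(Ω, d)` be a first order differential calculus over a `k`-algebra `A`, `E`, `F`
left `A`-modules and `N_d(E) ⊆ A ⊗[k] E` the submodule of elements `Σ aᵢ ⊗ eᵢ` with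
`Σ aᵢ • eᵢ = 0` and `Σ d(aᵢ) ⊗ eᵢ = 0` in `Ω ⊗[A] E`, so that
`J¹_d E = (A ⊗[k] E) ⧸ N_d(E)`.  A `k`-linear map `Δ : E → F` is a differential
operator of order at most `1` (i.e. admits a left `A`-linear lift through the 1-jet
prolongation `e ↦ [1 ⊗ e]`) if and only if `Σ nᵢ • Δ eᵢ = 0` for every element
`Σ nᵢ ⊗ eᵢ` of `N_d(E)`. -/
theorem first_order_diffop_iff
    {k : Type*} [CommRing k] {A : Type*} [Ring A] [Algebra k A]
    {Ω : Type*} [AddCommGroup Ω] [Module k Ω] [Module A Ω] [Module Aᵐᵒᵖ Ω]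
    [SMulCommClass A Aᵐᵒᵖ Ω] [IsScalarTower k A Ω]
    (d : A →ₗ[k] Ω)
    (hleib : ∀ a b : A, d (a * b) = a • d b + op b • d a)
    (hgen : Submodule.span A (Set.range d) = ⊤)
    {E : Type*} [AddCommGroup E] [Module k E] [Module A E] [IsScalarTower k A E]
    {F : Type*} [AddCommGroup F] [Module k F] [Module A F] [IsScalarTower k A F]
    (NdE : Submodule A (A ⊗[k] E))
    (hNdE : ∀ (n : ℕ) (a : Fin n → A) (e : Fin n → E),
      (∑ i, a i ⊗ₜ[k] e i) ∈ NdE ↔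
        ((∑ i, a i • e i) = 0 ∧ (∑ i, d (a i) ⊗ₜ[ℤ] e i) ∈ omegaRel A Ω E))
    (Δ : E →ₗ[k] F) :
    (∃ L : ((A ⊗[k] E) ⧸ NdE) →ₗ[A] F,
      ∀ e : E, L (Submodule.Quotient.mk ((1 : A) ⊗ₜ[k] e)) = Δ e) ↔
    (∀ (n : ℕ) (a : Fin n → A) (e : Fin n → E),
      (∑ i, a i ⊗ₜ[k] e i) ∈ NdE → (∑ i, a i • Δ (e i)) = 0) := by
  constructor
  · rintro ⟨L, hL⟩ n a e hmem
    have key : ∀ i : Fin n,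
        (Submodule.Quotient.mk (a i ⊗ₜ[k] e i) : (A ⊗[k] E) ⧸ NdE)
          = a i • Submodule.Quotient.mk ((1 : A) ⊗ₜ[k] e i) := by
      intro i
      rw [← Submodule.Quotient.mk_smul, smul_tmul', smul_eq_mul, mul_one]
    calc (∑ i, a i • Δ (e i))
        = L (Submodule.Quotient.mk (∑ i, a i ⊗ₜ[k] e i)) := by
          rw [← Submodule.mkQ_apply, map_sum, map_sum]
          congr 1
          funext i
          rw [Submodule.mkQ_apply, key i, map_smul, hL]
      _ = 0 := by
          rw [(Submodule.Quotient.mk_eq_zero _).2 hmem, map_zero]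
  · intro h
    let b : A →ₗ[A] (E →ₗ[k] F) :=
      { toFun := fun a => a • (Δ : E →ₗ[k] F)
        map_add' := fun x y => add_smul x y Δ
        map_smul' := fun r x => mul_smul r x Δ }
    let φ : (A ⊗[k] E) →ₗ[A] F := TensorProduct.AlgebraTensorModule.lift b
    have hφ : ∀ (a : A) (x : E), φ (a ⊗ₜ[k] x) = a • Δ x := fun a x => rfl
    have hker : NdE ≤ LinearMap.ker φ := by
      intro x hx
      obtain ⟨S, rfl⟩ := TensorProduct.exists_finset x
      have hsum : (∑ p ∈ S, p.1 ⊗ₜ[k] p.2)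
          = ∑ i : Fin S.card, (S.equivFin.symm i).1.1 ⊗ₜ[k] (S.equivFin.symm i).1.2 := by
        rw [← Finset.sum_coe_sort S (fun p => p.1 ⊗ₜ[k] p.2),
          ← S.equivFin.symm.sum_comp (fun p => (p : A × E).1 ⊗ₜ[k] (p : A × E).2)]
      rw [hsum] at hx
      rw [LinearMap.mem_ker, hsum, map_sum]
      simp only [hφ]
      exact h _ _ _ hx
    refine ⟨NdE.liftQ φ hker, fun e => ?_⟩
    show φ ((1 : A) ⊗ₜ[k] e) = Δ e
    rw [hφ, one_smul]
end

section
/- Let A be a k-algebra with first order differential calculus (Ω¹_d, d) and E a left A-module. There is a bijective correspondence between connections on E (k-linear maps ∇ : E → Ω¹_d ⊗_A E with ∇(fe) = df ⊗ e + f∇e) and left A-linear splittings of the 1-jet short exact sequence 0 → Ω¹_d ⊗_A E → J¹_d E → E → 0, i.e. left A-linear maps ρ̃ : J¹_d E → Ω¹_d ⊗_A E restricting to the identity on Ω¹_d ⊗_A E. -/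
open TensorProduct MulOpposite

/-- The balanced tensor product `Ω ⊗[A] E`, a left `A`-module. -/
abbrev OmegaTensor (A : Type*) [Ring A] (Ω : Type*) (E : Type*)
    [AddCommGroup Ω] [AddCommGroup E] [Module A Ω] [Module Aᵐᵒᵖ Ω] [Module A E] :=
  (Ω ⊗[ℤ] E) ⧸ omegaRel A Ω E

theorem exists_fin_sum_rep {k A E : Type*} [CommRing k] [Ring A] [Algebra k A]
    [AddCommGroup E] [Module k E] (x : A ⊗[k] E) :
    ∃ (n : ℕ) (a : Fin n → A) (e : Fin n → E), x = ∑ i, a i ⊗ₜ[k] e i := by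
  induction x using TensorProduct.induction_on with
  | zero => exact ⟨0, ![], ![], by simp⟩
  | tmul a e => exact ⟨1, ![a], ![e], by simp⟩
  | add x y hx hy =>
    obtain ⟨n, a, e, rfl⟩ := hx
    obtain ⟨m, b, f, rfl⟩ := hy
    refine ⟨n + m, Fin.append a b, Fin.append e f, ?_⟩
    rw [Fin.sum_univ_add]
    simp [Fin.append_left, Fin.append_right]

/-- Let `(Ω, d)` be a first order differential calculus over a `k`-algebra `A` and `E` a
left `A`-module.  Taking `ρ ↦ ρ ∘ j¹` (where `j¹ : e ↦ [1 ⊗ e]` is the 1-jet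
prolongation into `J¹_d E = (A ⊗[k] E) ⧸ N_d(E)`) gives a bijective correspondence
between left `A`-linear splittings of the 1-jet short exact sequence
`0 → Ω ⊗[A] E → J¹_d E → E → 0` (left `A`-linear maps `J¹_d E → Ω ⊗[A] E`
restricting to the identity on `Ω ⊗[A] E`, which embeds by
`d a ⊗ e ↦ [1 ⊗ a•e] − [a ⊗ e]`) and connections on `E`. -/
theorem connections_equiv_splittings
    {k : Type*} [CommRing k] {A : Type*} [Ring A] [Algebra k A]
    {Ω : Type*} [AddCommGroup Ω] [Module k Ω] [Module A Ω] [Module Aᵐᵒᵖ Ω]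
    [SMulCommClass A Aᵐᵒᵖ Ω] [IsScalarTower k A Ω]
    (d : A →ₗ[k] Ω)
    (hleib : ∀ a b : A, d (a * b) = a • d b + op b • d a)
    (hgen : Submodule.span A (Set.range d) = ⊤)
    {E : Type*} [AddCommGroup E] [Module k E] [Module A E] [IsScalarTower k A E]
    (NdE : Submodule A (A ⊗[k] E))
    (hNdE : ∀ (n : ℕ) (a : Fin n → A) (e : Fin n → E),
      (∑ i, a i ⊗ₜ[k] e i) ∈ NdE ↔
        ((∑ i, a i • e i) = 0 ∧ (∑ i, d (a i) ⊗ₜ[ℤ] e i) ∈ omegaRel A Ω E)) :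
    ∃ Φ : {ρ : ((A ⊗[k] E) ⧸ NdE) →ₗ[A] OmegaTensor A Ω E //
            -- ρ restricts to the identity on Ω ⊗[A] E
            ∀ (a : A) (e : E),
              ρ ((Submodule.Quotient.mk ((1 : A) ⊗ₜ[k] (a • e)) :
                    (A ⊗[k] E) ⧸ NdE) -
                  Submodule.Quotient.mk (a ⊗ₜ[k] e)) =
                Submodule.Quotient.mk (d a ⊗ₜ[ℤ] e)} →
          {c : E → OmegaTensor A Ω E //
            -- c is a connection: additive, k-linear, and satisfies the Leibniz rule
            (∀ e e' : E, c (e + e') = c e + c e') ∧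
            (∀ (t : k) (e : E),
              c (algebraMap k A t • e) = algebraMap k A t • c e) ∧
            (∀ (f : A) (e : E),
              c (f • e) = Submodule.Quotient.mk (d f ⊗ₜ[ℤ] e) + f • c e)},
      (∀ ρ, ∀ e : E,
        (Φ ρ).1 e = ρ.1 (Submodule.Quotient.mk ((1 : A) ⊗ₜ[k] e))) ∧
      Function.Bijective Φ := by
  classical
  -- fact A : mk (a ⊗ e) = a • mk (1 ⊗ e)
  have factA : ∀ (a : A) (e : E),
      (Submodule.Quotient.mk (a ⊗ₜ[k] e) : (A ⊗[k] E) ⧸ NdE)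
        = a • Submodule.Quotient.mk ((1 : A) ⊗ₜ[k] e) := by
    intro a e
    rw [← Submodule.Quotient.mk_smul]
    congr 1
    rw [smul_tmul']
    simp
  have prop1 : ∀ ρ : {ρ : ((A ⊗[k] E) ⧸ NdE) →ₗ[A] OmegaTensor A Ω E //
      ∀ (a : A) (e : E),
        ρ ((Submodule.Quotient.mk ((1 : A) ⊗ₜ[k] (a • e)) : (A ⊗[k] E) ⧸ NdE) -
            Submodule.Quotient.mk (a ⊗ₜ[k] e)) =
          Submodule.Quotient.mk (d a ⊗ₜ[ℤ] e)},
      ∀ e e' : E, ρ.1 (Submodule.Quotient.mk ((1 : A) ⊗ₜ[k] (e + e')))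
        = ρ.1 (Submodule.Quotient.mk ((1 : A) ⊗ₜ[k] e))
          + ρ.1 (Submodule.Quotient.mk ((1 : A) ⊗ₜ[k] e')) := by
    intro ρ e e'
    rw [tmul_add, ← map_add]
    rfl
  have prop3 : ∀ ρ : {ρ : ((A ⊗[k] E) ⧸ NdE) →ₗ[A] OmegaTensor A Ω E //
      ∀ (a : A) (e : E),
        ρ ((Submodule.Quotient.mk ((1 : A) ⊗ₜ[k] (a • e)) : (A ⊗[k] E) ⧸ NdE) -
            Submodule.Quotient.mk (a ⊗ₜ[k] e)) =
          Submodule.Quotient.mk (d a ⊗ₜ[ℤ] e)},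
      ∀ (f : A) (e : E), ρ.1 (Submodule.Quotient.mk ((1 : A) ⊗ₜ[k] (f • e)))
        = Submodule.Quotient.mk (d f ⊗ₜ[ℤ] e)
          + f • ρ.1 (Submodule.Quotient.mk ((1 : A) ⊗ₜ[k] e)) := by
    intro ρ f e
    have h := ρ.2 f e
    rw [map_sub] at h
    have : ρ.1 (Submodule.Quotient.mk ((1 : A) ⊗ₜ[k] (f • e)))
        = Submodule.Quotient.mk (d f ⊗ₜ[ℤ] e) + ρ.1 (Submodule.Quotient.mk (f ⊗ₜ[k] e)) := by
      rw [← h]; abel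
    rw [this, factA, map_smul]
  have prop2 : ∀ ρ : {ρ : ((A ⊗[k] E) ⧸ NdE) →ₗ[A] OmegaTensor A Ω E //
      ∀ (a : A) (e : E),
        ρ ((Submodule.Quotient.mk ((1 : A) ⊗ₜ[k] (a • e)) : (A ⊗[k] E) ⧸ NdE) -
            Submodule.Quotient.mk (a ⊗ₜ[k] e)) =
          Submodule.Quotient.mk (d a ⊗ₜ[ℤ] e)},
      ∀ (t : k) (e : E), ρ.1 (Submodule.Quotient.mk ((1 : A) ⊗ₜ[k] (algebraMap k A t • e)))
        = algebraMap k A t • ρ.1 (Submodule.Quotient.mk ((1 : A) ⊗ₜ[k] e)) := by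
    intro ρ t e
    have h1 : (1 : A) ⊗ₜ[k] (algebraMap k A t • e) = (algebraMap k A t) ⊗ₜ[k] e := by
      rw [algebraMap_smul, tmul_smul, smul_tmul']
      congr 1
      simp [Algebra.smul_def]
    rw [h1, factA, map_smul]
  refine ⟨fun ρ => ⟨fun e => ρ.1 (Submodule.Quotient.mk ((1 : A) ⊗ₜ[k] e)),
    prop1 ρ, prop2 ρ, prop3 ρ⟩, fun ρ e => rfl, ?_, ?_⟩
  · -- injective
    intro ρ₁ ρ₂ h
    have h' : ∀ e : E, ρ₁.1 (Submodule.Quotient.mk ((1 : A) ⊗ₜ[k] e))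
        = ρ₂.1 (Submodule.Quotient.mk ((1 : A) ⊗ₜ[k] e)) := by
      intro e
      exact congrFun (congrArg Subtype.val h) e
    apply Subtype.ext
    apply LinearMap.ext
    intro x
    obtain ⟨y, rfl⟩ := Submodule.Quotient.mk_surjective _ x
    induction y using TensorProduct.induction_on with
    | zero => simp
    | tmul a e => rw [factA, map_smul, map_smul, h']
    | add x y hx hy =>
      rw [Submodule.Quotient.mk_add, map_add, map_add, hx, hy]
  · -- surjective
    rintro ⟨c, hadd, hk, hlb⟩
    have hksmul : ∀ (t : k) (e : E), c (t • e) = t • c e := by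
      intro t e
      have := hk t e
      rwa [algebraMap_smul, algebraMap_smul] at this
    let c' : E →ₗ[k] OmegaTensor A Ω E :=
      { toFun := c, map_add' := hadd, map_smul' := hksmul }
    let B : A →ₗ[k] E →ₗ[k] OmegaTensor A Ω E :=
      { toFun := fun a =>
          { toFun := fun e => a • c e
            map_add' := fun e e' => by
              show a • c (e + e') = a • c e + a • c e'
              rw [hadd, smul_add]
            map_smul' := fun t e => by
              show a • c (t • e) = t • (a • c e)
              rw [hksmul, smul_comm] }
        map_add' := fun a a' => by
          ext e; simp [add_smul]
        map_smul' := fun t a => by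
          ext e
          simp only [LinearMap.coe_mk, AddHom.coe_mk, LinearMap.smul_apply,
            RingHom.id_apply]
          rw [Algebra.smul_def, mul_smul, algebraMap_smul] }
    let L : A ⊗[k] E →ₗ[k] OmegaTensor A Ω E := TensorProduct.lift B
    have hL : ∀ (a : A) (e : E), L (a ⊗ₜ[k] e) = a • c e := fun a e => rfl
    have hLsmul : ∀ (b : A) (x : A ⊗[k] E), L (b • x) = b • L x := by
      intro b x
      induction x using TensorProduct.induction_on with
      | zero => simp
      | tmul a e => rw [smul_tmul', hL, hL, smul_eq_mul, mul_smul]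
      | add x y hx hy => rw [smul_add, map_add, map_add, hx, hy, smul_add]
    let rhoHat : A ⊗[k] E →ₗ[A] OmegaTensor A Ω E :=
      { toFun := L, map_add' := map_add L, map_smul' := hLsmul }
    have hrhoHat : ∀ (a : A) (e : E), rhoHat (a ⊗ₜ[k] e) = a • c e := fun a e => rfl
    have hker : NdE ≤ LinearMap.ker rhoHat := by
      intro x hx
      obtain ⟨n, a, e, rfl⟩ := exists_fin_sum_rep x
      rw [hNdE] at hx
      obtain ⟨h1, h2⟩ := hx
      rw [LinearMap.mem_ker, map_sum]
      have key : ∀ i, rhoHat (a i ⊗ₜ[k] e i)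
          = c' (a i • e i) - Submodule.Quotient.mk (d (a i) ⊗ₜ[ℤ] e i) := by
        intro i
        rw [hrhoHat]
        have := hlb (a i) (e i)
        show a i • c (e i) = c (a i • e i) - _
        rw [this]; abel
      rw [Finset.sum_congr rfl (fun i _ => key i), Finset.sum_sub_distrib,
        ← map_sum c', h1, map_zero]
      have : (∑ i, (Submodule.Quotient.mk (d (a i) ⊗ₜ[ℤ] e i) : OmegaTensor A Ω E))
          = Submodule.Quotient.mk (∑ i, d (a i) ⊗ₜ[ℤ] e i) := by
        simp [← Submodule.mkQ_apply, ← map_sum]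
      rw [this, (Submodule.Quotient.mk_eq_zero _).mpr h2, sub_zero]
    let ρ : ((A ⊗[k] E) ⧸ NdE) →ₗ[A] OmegaTensor A Ω E := NdE.liftQ rhoHat hker
    have hρ : ∀ y : A ⊗[k] E, ρ (Submodule.Quotient.mk y) = rhoHat y := fun y => rfl
    have hsplit : ∀ (a : A) (e : E),
        ρ ((Submodule.Quotient.mk ((1 : A) ⊗ₜ[k] (a • e)) : (A ⊗[k] E) ⧸ NdE) -
            Submodule.Quotient.mk (a ⊗ₜ[k] e)) =
          Submodule.Quotient.mk (d a ⊗ₜ[ℤ] e) := by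
      intro a e
      rw [map_sub, hρ, hρ, hrhoHat, hrhoHat, one_smul, hlb]
      abel
    refine ⟨⟨ρ, hsplit⟩, ?_⟩
    apply Subtype.ext
    funext e
    show ρ (Submodule.Quotient.mk ((1 : A) ⊗ₜ[k] e)) = c e
    rw [hρ, hrhoHat, one_smul]
end
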